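/- arXiv:1707.03884 — 4 statements merged into one kernel-verified Lean document; each statement's English description precedes it below -/
import Mathlib

section
/- Let G be a group and let X and Y be crossed G-sets. The braiding c_{X,Y} : X × Y → Y × X, (x,y) ↦ (|x|·y, x), is a bijection; it is G-equivariant, i.e., c_{X,Y}(g·x, g·y) = g·c_{X,Y}(x,y) for all g ∈ G, where G acts diagonally on the products; and it preserves the grading, i.e., |c_{X,Y}(x,y)| = |x||y| = |(x,y)|. -/
/-- Let `G` be a group and `X`, `Y` crossed `G`-sets with
gradings `dX`, `dY`.  The braiding `c_{X,Y} : X × Y → Y × X`,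
`(x, y) ↦ (|x| • y, x)`, is a bijection; it is `G`-equivariant for the diagonal
actions; and it preserves the grading: `|c_{X,Y}(x,y)| = |x||y| = |(x,y)|`. -/
theorem crossed_GSet_braiding {G X Y : Type} [Group G] [MulAction G X] [MulAction G Y]
    (dX : X → G) (dY : Y → G)
    (hX : ∀ (g : G) (x : X), dX (g • x) = g * dX x * g⁻¹)
    (hY : ∀ (g : G) (y : Y), dY (g • y) = g * dY y * g⁻¹) :
    Function.Bijective (fun p : X × Y => ((dX p.1 • p.2 : Y), p.1)) ∧
    (∀ (g : G) (p : X × Y),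
      ((dX (g • p.1) • (g • p.2) : Y), g • p.1) = ((g • (dX p.1 • p.2) : Y), g • p.1)) ∧
    (∀ p : X × Y, dY (dX p.1 • p.2) * dX p.1 = dX p.1 * dY p.2) := by
  refine ⟨?_, ?_, ?_⟩
  · refine Function.bijective_iff_has_inverse.mpr
      ⟨fun q => (q.2, (dX q.2)⁻¹ • q.1), fun p => ?_, fun q => ?_⟩
    · simp
    · simp
  · intro g p
    simp [hX, mul_smul]
  · intro p
    rw [hY]
    group
end

section
/- Let G be a group and X a crossed G-set. The map c : X × X → X × X, c(x,y) = (|x|·y, x), is a set-theoretic solution of the Yang–Baxter equation: (c × id) ∘ (id × c) ∘ (c × id) = (id × c) ∘ (c × id) ∘ (id × c) as maps X³ → X³. Consequently, for every n ≥ 2 the maps σ_i := id_{X^{i-1}} × c × id_{X^{n-i-1}} on X^n (1 ≤ i ≤ n-1) satisfy the braid relations σ_i σ_{i+1} σ_i = σ_{i+1} σ_i σ_{i+1} and σ_i σ_j = σ_j σ_i whenever |i - j| ≥ 2. -/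
/-- The map `σ_i` on `X^n` (0-indexed: it acts on the entries `i` and `i+1`)
induced by the braiding `c(x, y) = (|x| • y, x)` of a crossed `G`-set. -/
def braidSigma {G X : Type} [Group G] [MulAction G X] (d : X → G)
    {n : ℕ} (i : ℕ) (hi : i + 1 < n) (x : Fin n → X) : Fin n → X :=
  fun j =>
    if j.1 = i then d (x ⟨i, Nat.lt_of_succ_lt hi⟩) • x ⟨i + 1, hi⟩
    else if j.1 = i + 1 then x ⟨i, Nat.lt_of_succ_lt hi⟩
    else x j

lemma ybKey {G X : Type} [Group G] [MulAction G X] (d : X → G)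
    (hd : ∀ (g : G) (x : X), d (g • x) = g * d x * g⁻¹) (a b c : X) :
    d (d a • b) • d a • c = d a • d b • c := by
  rw [hd, smul_smul, smul_smul, inv_mul_cancel_right]

set_option maxHeartbeats 1000000 in
/-- Let `G` be a group and `X` a crossed `G`-set with grading `d`.
The map `c : X × X → X × X`, `c(x,y) = (|x| • y, x)`, is a set-theoretic solution
of the Yang–Baxter equation `(c × id) ∘ (id × c) ∘ (c × id) = (id × c) ∘ (c × id) ∘ (id × c)`
on `X³`.  Consequently, for every `n ≥ 2` the maps `σ_i = id^{i-1} × c × id^{n-i-1}`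
on `X^n` satisfy the braid relations `σ_i σ_{i+1} σ_i = σ_{i+1} σ_i σ_{i+1}` and
`σ_i σ_j = σ_j σ_i` whenever `|i - j| ≥ 2`. -/
theorem crossed_GSet_YangBaxter {G X : Type} [Group G] [MulAction G X]
    (d : X → G) (hd : ∀ (g : G) (x : X), d (g • x) = g * d x * g⁻¹) :
    (∀ t : X × X × X,
      (fun s : X × X × X => ((d s.1 • s.2.1 : X), s.1, s.2.2))
        ((fun s : X × X × X => (s.1, (d s.2.1 • s.2.2 : X), s.2.1))
          ((fun s : X × X × X => ((d s.1 • s.2.1 : X), s.1, s.2.2)) t)) =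
      (fun s : X × X × X => (s.1, (d s.2.1 • s.2.2 : X), s.2.1))
        ((fun s : X × X × X => ((d s.1 • s.2.1 : X), s.1, s.2.2))
          ((fun s : X × X × X => (s.1, (d s.2.1 • s.2.2 : X), s.2.1)) t))) ∧
    (∀ (n : ℕ), 2 ≤ n → ∀ (i : ℕ) (hi : i + 1 + 1 < n) (x : Fin n → X),
      braidSigma d i (Nat.lt_of_succ_lt hi)
          (braidSigma d (i + 1) hi (braidSigma d i (Nat.lt_of_succ_lt hi) x)) =
        braidSigma d (i + 1) hi
          (braidSigma d i (Nat.lt_of_succ_lt hi) (braidSigma d (i + 1) hi x))) ∧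
    (∀ (n : ℕ), 2 ≤ n → ∀ (i j : ℕ) (hi : i + 1 < n) (hj : j + 1 < n),
      (i + 2 ≤ j ∨ j + 2 ≤ i) → ∀ x : Fin n → X,
      braidSigma d i hi (braidSigma d j hj x) =
        braidSigma d j hj (braidSigma d i hi x)) := by
  refine ⟨?_, ?_, ?_⟩
  · rintro ⟨a, b, c⟩
    show (d (d a • b) • (d a • c), d a • b, a) = (d a • (d b • c), d a • b, a)
    rw [ybKey d hd]
  · intro n _ i hi x
    funext j
    simp only [braidSigma]
    split_ifs <;> first
      | rfl
      | omega
      | (exact congrArg x (Fin.ext (by omega)))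
      | (exact ybKey d hd _ _ _)
  · intro n _ i j hi hj hij x
    funext k
    simp only [braidSigma]
    split_ifs <;> first
      | rfl
      | omega
      | (exact congrArg x (Fin.ext (by omega)))
end

section
/- Let G be a finite group, ω a normalized 3-cocycle on G, X a finite crossed G-set, and λ a twisted monomial structure on X. Then the dimension of the G-invariant subspace (V^{⊗n}_e)^G is equal to the number of regular G-orbits under the monomial action of G on (X^n)_e = {(x_1,…,x_n) : |x_1||x_2|⋯|x_n| = e}. -/
open scoped BigOperators Classical

noncomputable section

namespace DW

variable {G X : Type} [Group G] [Fintype G]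

/-- `ω(g; f, h) := ω(g,f,h)·ω(^g f, g, h)⁻¹·ω(^g f, ^g h, g)`. -/
def omega1 (ω : G → G → G → ℂˣ) (g f h : G) : ℂˣ :=
  ω g f h * (ω (g * f * g⁻¹) g h)⁻¹ * ω (g * f * g⁻¹) (g * h * g⁻¹) g

/-- `ω(g, g'; h) := ω(g, ^{g'}h, g') / (ω(^{gg'}h, g, g')·ω(g,g',h))`. -/
def omega2 (ω : G → G → G → ℂˣ) (g g' h : G) : ℂˣ :=
  ω g (g' * h * g'⁻¹) g' * (ω ((g * g') * h * (g * g')⁻¹) g g')⁻¹ * (ω g g' h)⁻¹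

/-- The partial product `|x_1||x_2|⋯|x_k|` of the degrees of the first `k`
entries of a tuple. -/
def pparts (d : X → G) {n : ℕ} (x : Fin n → X) (k : ℕ) : G :=
  ((List.ofFn fun j : Fin n => d (x j)).take k).prod

/-- `λ_{X^n}(g; x_1, …, x_n) = (∏ᵢ λ(g;xᵢ)) ∏_{k≥2} ω(g; |x_1|⋯|x_{k-1}|, |x_k|)`. -/
def LamN (ω : G → G → G → ℂˣ) (lam : G → X → ℂˣ) (d : X → G) {n : ℕ}
    (g : G) (x : Fin n → X) : ℂˣ :=
  (∏ i : Fin n, lam g (x i)) *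
    ∏ k : Fin n, if k.1 = 0 then 1 else omega1 ω g (pparts d x k.1) (d (x k))

/-- The linear action of `g ∈ G` on `V^{⊗n}`, modelled on the free vector space
on `X^n`:  `g ▷ v_x = λ_{X^n}(g; x) v_{g·x}`. -/
def rhoL (ω : G → G → G → ℂˣ) (lam : G → X → ℂˣ) (d : X → G) (act : G → X → X)
    {n : ℕ} (g : G) : ((Fin n → X) → ℂ) →ₗ[ℂ] ((Fin n → X) → ℂ) where
  toFun φ := fun y =>
    (LamN ω lam d g (fun i => act g⁻¹ (y i)) : ℂ) * φ (fun i => act g⁻¹ (y i))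
  map_add' φ ψ := by funext y; simp [mul_add]
  map_smul' c φ := by
    funext y
    simp only [Pi.smul_apply, smul_eq_mul, RingHom.id_apply]
    ring

/-- The averaging operator `Av_G = |G|⁻¹ ∑_g (g ▷ ·)` on `V^{⊗n}`. -/
def AvN (ω : G → G → G → ℂˣ) (lam : G → X → ℂˣ) (d : X → G) (act : G → X → X)
    {n : ℕ} : ((Fin n → X) → ℂ) →ₗ[ℂ] ((Fin n → X) → ℂ) :=
  (Fintype.card G : ℂ)⁻¹ • ∑ g : G, rhoL ω lam d act g

/-- The degree-`e` part `V^{⊗n}_e` : functions supported on tuples whose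
degrees multiply to the identity. -/
def degSub (d : X → G) (n : ℕ) : Submodule ℂ ((Fin n → X) → ℂ) where
  carrier := {φ | ∀ x : Fin n → X, pparts d x n ≠ 1 → φ x = 0}
  add_mem' := by
    intro a b ha hb x hx
    have h1 := ha x hx
    have h2 := hb x hx
    simp only [Pi.add_apply, h1, h2, add_zero]
  zero_mem' := by intro x _; rfl
  smul_mem' := by
    intro c a ha x hx
    have h1 := ha x hx
    simp only [Pi.smul_apply, h1, smul_eq_mul, mul_zero]

/-- The space of `G`-invariant vectors in `V^{⊗n}_e`; this is the model of
`Hom_{Z(Vec_G^ω)}(ℂ, V^{⊗n})`. -/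
def invSub (ω : G → G → G → ℂˣ) (lam : G → X → ℂˣ) (d : X → G) (act : G → X → X)
    (n : ℕ) : Submodule ℂ ((Fin n → X) → ℂ) :=
  degSub d n ⊓ ⨅ g : G, LinearMap.eqLocus (rhoL ω lam d act g (n := n)) LinearMap.id

/-- A tuple `x ∈ (X^n)_e` is regular if `λ_{X^n}(g; x) = 1` for every `g` in the
common stabilizer of its entries. -/
def RegT (ω : G → G → G → ℂˣ) (lam : G → X → ℂˣ) (d : X → G) (act : G → X → X)
    {n : ℕ} (x : Fin n → X) : Prop :=
  pparts d x n = 1 ∧ ∀ g : G, (∀ i, act g (x i) = x i) → LamN ω lam d g x = 1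

/-- The basis vector `v_{x_1} ⊗ ⋯ ⊗ v_{x_n}` of the model of `V^{⊗n}`. -/
def deltaF {n : ℕ} (x : Fin n → X) : (Fin n → X) → ℂ :=
  fun y => if y = x then 1 else 0

/-- The underlying tuple map of the braid generator:
`σ_i(x) = (x_1, …, x_{i-1}, |x_i|·x_{i+1}, x_i, x_{i+2}, …, x_n)` (0-indexed). -/
def sigmaTuple (d : X → G) (act : G → X → X) {n : ℕ} (i : ℕ) (hi : i + 1 < n)
    (x : Fin n → X) : Fin n → X :=
  fun j =>
    if j.1 = i then act (d (x ⟨i, Nat.lt_of_succ_lt hi⟩)) (x ⟨i + 1, hi⟩)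
    else if j.1 = i + 1 then x ⟨i, Nat.lt_of_succ_lt hi⟩
    else x j

/-- The inverse of `sigmaTuple`. -/
def sigmaInvTuple (d : X → G) (act : G → X → X) {n : ℕ} (i : ℕ) (hi : i + 1 < n)
    (y : Fin n → X) : Fin n → X :=
  fun j =>
    if j.1 = i then y ⟨i + 1, hi⟩
    else if j.1 = i + 1 then act (d (y ⟨i + 1, hi⟩))⁻¹ (y ⟨i, Nat.lt_of_succ_lt hi⟩)
    else y j

/-- The scalar appearing in the action of the braid generator `σ_i'` on a basis
vector: `ω(|x_1|⋯|x_{i-1}|, |x_{i+1}|, |x_i|)⁻¹ λ(|x_i|; x_{i+1}) ω(|x_1|⋯|x_{i-1}|, |x_i|, |x_{i+1}|)`. -/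
def braidCoef (ω : G → G → G → ℂˣ) (lam : G → X → ℂˣ) (d : X → G) {n : ℕ}
    (i : ℕ) (hi : i + 1 < n) (x : Fin n → X) : ℂˣ :=
  (ω (pparts d x i) (d (x ⟨i + 1, hi⟩)) (d (x ⟨i, Nat.lt_of_succ_lt hi⟩)))⁻¹ *
    lam (d (x ⟨i, Nat.lt_of_succ_lt hi⟩)) (x ⟨i + 1, hi⟩) *
    ω (pparts d x i) (d (x ⟨i, Nat.lt_of_succ_lt hi⟩)) (d (x ⟨i + 1, hi⟩))

/-- The braid operator `σ_i'` on the model of `V^{⊗n}`, determined by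
`σ_i'(v_x) = braidCoef(x) • v_{σ_i(x)}`. -/
def sigmaOp (ω : G → G → G → ℂˣ) (lam : G → X → ℂˣ) (d : X → G) (act : G → X → X)
    {n : ℕ} (i : ℕ) (hi : i + 1 < n) :
    ((Fin n → X) → ℂ) →ₗ[ℂ] ((Fin n → X) → ℂ) where
  toFun φ := fun y =>
    (braidCoef ω lam d i hi (sigmaInvTuple d act i hi y) : ℂ) *
      φ (sigmaInvTuple d act i hi y)
  map_add' φ ψ := by funext y; simp [mul_add]
  map_smul' c φ := by
    funext y
    simp only [Pi.smul_apply, smul_eq_mul, RingHom.id_apply]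
    ring

/-- The orbit relation on tuples for the (entrywise) `G`-action. -/
def tupleOrbRel (act : G → X → X) {n : ℕ} (x y : Fin n → X) : Prop :=
  ∃ g : G, (fun i => act g (x i)) = y

end DW

open DW

/-!
An invariant vector of the monomial representation `g ▷ v_y = c(g, y) v_{g·y}` is a function `φ`
with `φ (g • y) = c g y * φ y`. Such a `φ` is determined by one value per orbit, that value can be
nonzero only when `c(·, y)` is trivial on the stabiliser of `y`, and on such a regular orbit every
value extends, because `c` is a 1-cocycle. So the invariants are the functions on regular orbits.

For `V^{⊗n}_e` the cocycle is `λ_{X^n}`: by induction on `n`,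
`λ_{X^n}(gh; x) = ω(g, h; |x_1|⋯|x_n|) λ_{X^n}(g; h·x) λ_{X^n}(h; x)`, where the inductive step is
an identity between `ω(g; -, -)` and `ω(g, h; -)` that is a product of six instances of the
3-cocycle condition; on tuples of degree `e` the normalisation kills the factor `ω(g, h; e)`.
-/

theorem Module.finrank_fun_eq_natCard (K ι : Type*) [Field K] :
    Module.finrank K (ι → K) = Nat.card ι := by
  cases finite_or_infinite ι
  · have := Fintype.ofFinite ι
    rw [Module.finrank_fintype_fun_eq_card, Nat.card_eq_fintype_card]
  · rw [Nat.card_eq_zero_of_infinite, Module.finrank_of_not_finite]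
    intro h
    have : Module.Finite K (ι →₀ K) :=
      Module.Finite.of_injective Finsupp.lcoeFun DFunLike.coe_injective
    simp [Module.finite_finsupp_self_iff, not_finite_iff_infinite.mpr ‹_›,
      not_subsingleton] at this

namespace MonomialAction

open MulAction

variable {G Y K : Type*} [Group G] [MulAction G Y] [Field K]

def invariants (S : Set Y) (c : G → Y → Kˣ) : Submodule K (Y → K) where
  carrier := {φ | (∀ y ∉ S, φ y = 0) ∧ ∀ (g : G) (y : Y), φ (g • y) = c g y * φ y}
  add_mem' := by
    rintro φ ψ ⟨hφS, hφ⟩ ⟨hψS, hψ⟩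
    exact ⟨fun y hy => by simp [hφS y hy, hψS y hy], fun g y => by simp [hφ, hψ, mul_add]⟩
  zero_mem' := by simp
  smul_mem' := by
    rintro a φ ⟨hφS, hφ⟩
    exact ⟨fun y hy => by simp [hφS y hy], fun g y => by simp [hφ, mul_left_comm]⟩

structure IsCocycleOn (S : Set Y) (c : G → Y → Kˣ) : Prop where
  smul_mem : ∀ (g : G), ∀ y ∈ S, g • y ∈ S
  map_mul : ∀ g h : G, ∀ y ∈ S, c (g * h) y = c g (h • y) * c h y

def IsRegular (S : Set Y) (c : G → Y → Kˣ) (y : Y) : Prop :=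
  y ∈ S ∧ ∀ g : G, g • y = y → c g y = 1

abbrev RegularOrbit (S : Set Y) (c : G → Y → Kˣ) : Type _ :=
  {O : orbitRel.Quotient G Y // ∃ y, Quotient.mk'' y = O ∧ IsRegular S c y}

variable {S : Set Y} {c : G → Y → Kˣ}

theorem IsCocycleOn.map_one (hc : IsCocycleOn S c) {y : Y} (hy : y ∈ S) : c 1 y = 1 := by
  simpa using hc.map_mul 1 1 y hy

theorem IsRegular.map_eq_of_smul_eq (hc : IsCocycleOn S c) {y : Y} (hy : IsRegular S c y)
    {g g' : G} (h : g • y = g' • y) : c g y = c g' y := by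
  have hfix : (g'⁻¹ * g) • y = y := by rw [mul_smul, h, inv_smul_smul]
  calc c g y = c (g' * (g'⁻¹ * g)) y := by rw [mul_inv_cancel_left]
    _ = c g' y := by rw [hc.map_mul _ _ y hy.1, hfix, hy.2 _ hfix, mul_one]

theorem IsRegular.smul (hc : IsCocycleOn S c) {y : Y} (hy : IsRegular S c y) (g : G) :
    IsRegular S c (g • y) := by
  refine ⟨hc.smul_mem g y hy.1, fun s hs => ?_⟩
  have h := hc.map_mul s g y hy.1
  rw [hy.map_eq_of_smul_eq hc (g := s * g) (g' := g) (by rw [mul_smul, hs])] at h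
  exact right_eq_mul.mp h

theorem isRegular_smul_iff (hc : IsCocycleOn S c) (g : G) {y : Y} :
    IsRegular S c (g • y) ↔ IsRegular S c y :=
  ⟨fun h => by simpa using h.smul hc g⁻¹, fun h => h.smul hc g⟩

theorem eq_zero_of_not_isRegular {φ : Y → K} (hφ : φ ∈ invariants S c) {y : Y}
    (hy : ¬ IsRegular S c y) : φ y = 0 := by
  by_cases hyS : y ∈ S
  · obtain ⟨s, hs, hcs⟩ : ∃ s : G, s • y = y ∧ c s y ≠ 1 := by
      simpa [IsRegular, hyS] using hy
    have h := hφ.2 s y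
    rw [hs] at h
    have hcs' : (c s y : K) ≠ 1 := by simpa [Units.val_eq_one] using hcs
    by_contra hne
    exact hcs' ((mul_eq_right₀ hne).mp h.symm)
  · exact hφ.1 y hyS

theorem RegularOrbit.isRegular_out (hc : IsCocycleOn S c) (O : RegularOrbit S c) :
    IsRegular S c O.1.out := by
  obtain ⟨y, hyO, hy⟩ := O.2
  obtain ⟨g, hg⟩ := Quotient.exact' (O.1.out_eq'.trans hyO.symm)
  exact hg ▸ hy.smul hc g

theorem exists_smul_out_eq {y : Y} (hy : IsRegular S c y) :
    ∃ p : RegularOrbit S c × G, p.2 • p.1.1.out = y :=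
  let O : RegularOrbit S c := ⟨Quotient.mk'' y, y, rfl, hy⟩
  let ⟨g, hg⟩ := Quotient.exact' O.1.out_eq'.symm
  ⟨(O, g), hg⟩

theorem RegularOrbit.eq_of_smul_out_eq (hc : IsCocycleOn S c) {O O' : RegularOrbit S c}
    {g g' : G} (h : g • O.1.out = g' • O'.1.out) :
    O = O' ∧ c g O.1.out = c g' O'.1.out := by
  obtain rfl : O = O' := by
    apply Subtype.ext
    rw [← O.1.out_eq', ← O'.1.out_eq']
    exact Quotient.sound' ⟨g⁻¹ * g', by simp only [mul_smul, ← h, inv_smul_smul]⟩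
  exact ⟨rfl, (O.isRegular_out hc).map_eq_of_smul_eq hc h⟩

/-- The invariant vector with prescribed values `f O` at the representatives `O.out`. -/
def extend (f : RegularOrbit S c → K) (y : Y) : K :=
  if h : ∃ p : RegularOrbit S c × G, p.2 • p.1.1.out = y then
    f h.choose.1 * c h.choose.2 h.choose.1.1.out
  else 0

theorem extend_smul_out (hc : IsCocycleOn S c) (f : RegularOrbit S c → K)
    (O : RegularOrbit S c) (g : G) : extend f (g • O.1.out) = f O * c g O.1.out := by
  have h : ∃ p : RegularOrbit S c × G, p.2 • p.1.1.out = g • O.1.out := ⟨(O, g), rfl⟩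
  obtain ⟨hO, hc'⟩ := RegularOrbit.eq_of_smul_out_eq hc h.choose_spec
  rw [extend, dif_pos h, hc', hO]

theorem extend_of_not_isRegular (hc : IsCocycleOn S c) (f : RegularOrbit S c → K) {y : Y}
    (hy : ¬ IsRegular S c y) : extend f y = 0 := by
  refine dif_neg ?_
  rintro ⟨⟨O, g⟩, rfl⟩
  exact hy ((O.isRegular_out hc).smul hc g)

theorem extend_mem (hc : IsCocycleOn S c) (f : RegularOrbit S c → K) :
    extend f ∈ invariants S c := by
  refine ⟨fun y hy => extend_of_not_isRegular hc f fun h => hy h.1, fun k y => ?_⟩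
  by_cases hy : IsRegular S c y
  · obtain ⟨⟨O, g⟩, rfl⟩ := exists_smul_out_eq hy
    rw [smul_smul, extend_smul_out hc, extend_smul_out hc,
      hc.map_mul _ _ _ (O.isRegular_out hc).1, Units.val_mul]
    ring
  · rw [extend_of_not_isRegular hc f hy,
      extend_of_not_isRegular hc f (by rwa [isRegular_smul_iff hc]), mul_zero]

def invariantsEquiv (hc : IsCocycleOn S c) : invariants S c ≃ₗ[K] (RegularOrbit S c → K) where
  toFun φ O := φ.1 O.1.out
  map_add' _ _ := rfl
  map_smul' _ _ := rfl
  invFun f := ⟨extend f, extend_mem hc f⟩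
  left_inv := by
    rintro ⟨φ, hφ⟩
    refine Subtype.ext (funext fun y => ?_)
    by_cases hy : IsRegular S c y
    · obtain ⟨⟨O, g⟩, rfl⟩ := exists_smul_out_eq hy
      simp only [extend_smul_out hc, hφ.2 g, mul_comm]
    · simp only [extend_of_not_isRegular hc _ hy, eq_zero_of_not_isRegular hφ hy]
  right_inv f := funext fun O => by
    simpa [(O.isRegular_out hc).1, hc.map_one] using extend_smul_out hc f O 1

theorem finrank_invariants (hc : IsCocycleOn S c) :
    Module.finrank K (invariants S c) = Nat.card (RegularOrbit S c) := by
  rw [(invariantsEquiv hc).finrank_eq, Module.finrank_fun_eq_natCard]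

end MonomialAction

namespace DW

structure IsNormalized3Cocycle {G M : Type*} [Group G] [CommGroup M] (ω : G → G → G → M) :
    Prop where
  cocycle : ∀ a b c e : G, ω (a * b) c e * ω a b (c * e) = ω a b c * ω a (b * c) e * ω b c e
  normalized : ∀ a b : G, ω a 1 b = 1

section Cocycle

variable {G : Type} [Group G]

theorem IsNormalized3Cocycle.map_one_left {M : Type*} [CommGroup M] {ω : G → G → G → M}
    (hω : IsNormalized3Cocycle ω) (a b : G) : ω 1 a b = 1 := by
  simpa [hω.normalized] using hω.cocycle 1 1 a b

theorem IsNormalized3Cocycle.map_one_right {M : Type*} [CommGroup M] {ω : G → G → G → M}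
    (hω : IsNormalized3Cocycle ω) (a b : G) : ω a b 1 = 1 := by
  simpa [hω.normalized] using hω.cocycle a b 1 1

variable {ω : G → G → G → ℂˣ}

theorem omega1_one_middle (hω : IsNormalized3Cocycle ω) (g b : G) : omega1 ω g 1 b = 1 := by
  simp [omega1, hω.normalized, hω.map_one_left]

theorem omega2_one_right (hω : IsNormalized3Cocycle ω) (g h : G) : omega2 ω g h 1 = 1 := by
  simp [omega2, hω.normalized, hω.map_one_left, hω.map_one_right]

theorem omega1_mul (hω : IsNormalized3Cocycle ω) (g h a b : G) :
    omega1 ω (g * h) a b * omega2 ω g h a * omega2 ω g h b =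
      omega2 ω g h (a * b) * omega1 ω g (h * a * h⁻¹) (h * b * h⁻¹) * omega1 ω h a b := by
  have hω' a b c e := congrArg Additive.ofMul (hω.cocycle a b c e)
  have c1 := hω' g h a b
  have c2 := hω' g (h * a * h⁻¹) h b
  have c3 := hω' g (h * a * h⁻¹) (h * b * h⁻¹) h
  have c4 := hω' (g * h * a * (g * h)⁻¹) g h b
  have c5 := hω' (g * h * a * (g * h)⁻¹) g (h * b * h⁻¹) h
  have c6 := hω' (g * h * a * (g * h)⁻¹) (g * h * b * (g * h)⁻¹) g h
  apply Additive.ofMul.injective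
  simp only [omega1, omega2, ofMul_mul, ofMul_inv, mul_assoc, mul_inv_rev, inv_mul_cancel_left,
    inv_mul_cancel, mul_one] at c1 c2 c3 c4 c5 c6 ⊢
  linear_combination (norm := abel) c1 - c2 + c3 + c4 - c5 + c6

end Cocycle

section TensorPower

variable {G X : Type} [Group G] {d : X → G} {n : ℕ}

theorem pparts_last (x : Fin (n + 1) → X) :
    pparts d x (n + 1) = pparts d x n * d (x (Fin.last n)) := by
  rw [pparts, List.prod_take_succ _ _ (by simp), List.getElem_ofFn]
  rfl

theorem pparts_init (x : Fin (n + 1) → X) {k : ℕ} (hk : k ≤ n) :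
    pparts d (Fin.init x) k = pparts d x k := by
  rw [pparts, pparts, List.ofFn_succ', List.concat_eq_append,
    List.take_append_of_le_length (by simpa using hk)]
  rfl

theorem pparts_smul [MulAction G X] (hd : ∀ (g : G) (x : X), d (g • x) = g * d x * g⁻¹)
    (g : G) (x : Fin n → X) (k : ℕ) : pparts d (g • x) k = g * pparts d x k * g⁻¹ := by
  have hconj : (List.ofFn fun j => d ((g • x) j)) =
      (List.ofFn fun j => d (x j)).map (MulAut.conj g) := by
    simp [List.map_ofFn, Function.comp_def, hd]
  rw [pparts, hconj, ← List.map_take, ← map_list_prod]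
  rfl

variable {ω : G → G → G → ℂˣ} {lam : G → X → ℂˣ}

theorem LamN_succ (hω : IsNormalized3Cocycle ω) (g : G) (x : Fin (n + 1) → X) :
    LamN ω lam d g x = LamN ω lam d g (Fin.init x) *
      (lam g (x (Fin.last n)) * omega1 ω g (pparts d x n) (d (x (Fin.last n)))) := by
  have hlast : (if (Fin.last n : ℕ) = 0 then 1 else
      omega1 ω g (pparts d x (Fin.last n)) (d (x (Fin.last n)))) =
      omega1 ω g (pparts d x n) (d (x (Fin.last n))) := by
    split_ifs with hn
    · simp only [Fin.val_last] at hn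
      subst hn
      rw [pparts, List.take_zero, List.prod_nil, omega1_one_middle hω]
    · rfl
  rw [LamN, LamN, Fin.prod_univ_castSucc, Fin.prod_univ_castSucc (n := n), hlast,
    mul_mul_mul_comm]
  congr 3 with k
  rw [Fin.val_castSucc, ← pparts_init x k.2.le]
  rfl

variable [MulAction G X]

theorem LamN_mul (hω : IsNormalized3Cocycle ω)
    (hd : ∀ (g : G) (x : X), d (g • x) = g * d x * g⁻¹)
    (hlam : ∀ (g h : G) (x : X),
      lam (g * h) x = omega2 ω g h (d x) * lam g (h • x) * lam h x)
    (g h : G) (x : Fin n → X) :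
    LamN ω lam d (g * h) x =
      omega2 ω g h (pparts d x n) * LamN ω lam d g (h • x) * LamN ω lam d h x := by
  induction n with
  | zero => simp [LamN, pparts, omega2_one_right hω]
  | succ n ih =>
    rw [LamN_succ hω, LamN_succ hω g, LamN_succ hω h,
      show Fin.init (h • x) = h • Fin.init x from rfl, ih, pparts_init x le_rfl,
      pparts_smul hd, Pi.smul_apply, hd, hlam, pparts_last]
    have hs := congrArg Units.val (omega1_mul hω g h (pparts d x n) (d (x (Fin.last n))))
    push_cast at hs
    apply Units.ext
    push_cast
    linear_combination
      (↑(LamN ω lam d g (h • Fin.init x)) * ↑(LamN ω lam d h (Fin.init x)) *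
        ↑(lam g (h • x (Fin.last n))) * ↑(lam h (x (Fin.last n))) : ℂ) * hs

theorem isCocycleOn_LamN (hω : IsNormalized3Cocycle ω)
    (hd : ∀ (g : G) (x : X), d (g • x) = g * d x * g⁻¹)
    (hlam : ∀ (g h : G) (x : X),
      lam (g * h) x = omega2 ω g h (d x) * lam g (h • x) * lam h x) :
    MonomialAction.IsCocycleOn {x : Fin n → X | pparts d x n = 1} (LamN ω lam d) where
  smul_mem g x hx := by simp_all [pparts_smul hd]
  map_mul g h x hx := by
    rw [LamN_mul hω hd hlam, show pparts d x n = 1 from hx, omega2_one_right hω, one_mul]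

theorem invSub_eq_invariants :
    invSub ω lam d (· • ·) n =
      MonomialAction.invariants {x : Fin n → X | pparts d x n = 1} (LamN ω lam d) := by
  ext φ
  simp only [invSub, Submodule.mem_inf, Submodule.mem_iInf, LinearMap.mem_eqLocus, funext_iff]
  refine and_congr Iff.rfl (forall_congr' fun g => ?_)
  constructor
  · intro h x
    simpa [rhoL] using (h (g • x)).symm
  · intro h y
    exact (h (g⁻¹ • y)).symm.trans (congrArg φ (smul_inv_smul g y))

theorem regT_iff_isRegular (x : Fin n → X) :
    RegT ω lam d (· • ·) x ↔
      MonomialAction.IsRegular {x : Fin n → X | pparts d x n = 1} (LamN ω lam d) x := by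
  simp only [RegT, MonomialAction.IsRegular, Set.mem_ofPred_eq, funext_iff, Pi.smul_apply]

def quotTupleOrbRelEquiv : Quot (tupleOrbRel (fun (g : G) (x : X) => g • x) (n := n)) ≃
    MulAction.orbitRel.Quotient G (Fin n → X) :=
  Quot.congrRight fun _ _ => MulAction.mem_orbit_symm

end TensorPower

end DW

theorem finrank_invariants_eq_card_regular_orbits_general {G X : Type} [Group G]
    (ω : G → G → G → ℂˣ) (lam : G → X → ℂˣ) (d : X → G) (act : G → X → X)
    (hω : ∀ a b c e : G,
      ω (a * b) c e * ω a b (c * e) = ω a b c * ω a (b * c) e * ω b c e)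
    (hωn : ∀ a b : G, ω a 1 b = 1)
    (hact1 : ∀ x : X, act 1 x = x)
    (hactm : ∀ (g h : G) (x : X), act (g * h) x = act g (act h x))
    (hd : ∀ (g : G) (x : X), d (act g x) = g * d x * g⁻¹)
    (hlamm : ∀ (g h : G) (x : X),
      lam (g * h) x = omega2 ω g h (d x) * lam g (act h x) * lam h x)
    (n : ℕ) :
    Module.finrank ℂ (invSub ω lam d act n) =
      Nat.card {O : Quot (tupleOrbRel act (n := n)) //
        ∃ x : Fin n → X, Quot.mk (tupleOrbRel act) x = O ∧ RegT ω lam d act x} := by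
  let _ : MulAction G X := { smul := act, one_smul := hact1, mul_smul := hactm }
  have hc := isCocycleOn_LamN (n := n) ⟨hω, hωn⟩ hd hlamm
  rw [show invSub ω lam d act n = _ from invSub_eq_invariants,
    MonomialAction.finrank_invariants hc]
  refine Nat.card_congr (Equiv.subtypeEquiv quotTupleOrbRelEquiv fun O => ?_).symm
  exact exists_congr fun x =>
    and_congr quotTupleOrbRelEquiv.apply_eq_iff_eq.symm (regT_iff_isRegular x)

/-- For a finite group `G`, a normalized 3-cocycle `ω`, a finite
crossed `G`-set `X` and a twisted monomial structure `λ` on `X`, the dimension of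
the `G`-invariant subspace `(V^{⊗n}_e)^G` equals the number of regular
`G`-orbits under the monomial action of `G` on
`(X^n)_e = {(x_1,…,x_n) : |x_1|⋯|x_n| = e}`. -/
theorem finrank_invariants_eq_card_regular_orbits {G X : Type} [Group G] [Fintype G]
    (ω : G → G → G → ℂˣ) (lam : G → X → ℂˣ) (d : X → G) (act : G → X → X)
    (hω : ∀ a b c e : G,
      ω (a * b) c e * ω a b (c * e) = ω a b c * ω a (b * c) e * ω b c e)
    (hωn : ∀ a b : G, ω a 1 b = 1)
    (hact1 : ∀ x : X, act 1 x = x)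
    (hactm : ∀ (g h : G) (x : X), act (g * h) x = act g (act h x))
    (hd : ∀ (g : G) (x : X), d (act g x) = g * d x * g⁻¹)
    (hlam1 : ∀ x : X, lam 1 x = 1)
    (hlamm : ∀ (g h : G) (x : X),
      lam (g * h) x = omega2 ω g h (d x) * lam g (act h x) * lam h x)
    (n : ℕ) :
    Module.finrank ℂ (invSub ω lam d act n) =
      Nat.card {O : Quot (tupleOrbRel act (n := n)) //
        ∃ x : Fin n → X, Quot.mk (tupleOrbRel act) x = O ∧ RegT ω lam d act x} :=
  finrank_invariants_eq_card_regular_orbits_general ω lam d act hω hωn hact1 hactm hd hlamm n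
end
end

section
/- Let G be a finite group, H ≤ Z(G) a central subgroup, and γ : H×H → ℂ^× a 2-cocycle (so the associated 3-cocycle ω is trivial). Then the dimension of the subspace of G-invariant vectors of degree e in L(H,γ)^{⊗n} (the ground-state space Hom_{Z(Vec_G)}(ℂ, L(H,γ)^{⊗n})) equals |G|^{n-1}. Equivalently, with X = R×H as a crossed G-set, every tuple in (X^n)_e = {((r_1,h_1),…,(r_n,h_n)) : h_1h_2⋯h_n = e} is regular and the number of G-orbits in (X^n)_e is |G|^{n-1}. -/
open scoped BigOperators Classical

noncomputable section

namespace DW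

variable {G : Type} [Group G] [Fintype G]

/-- `ε(h₁, h₂) := γ(h₁,h₂) / γ(^{h₁}h₂, h₁)`. -/
def epsilon (γ : G → G → ℂˣ) (a b : G) : ℂˣ :=
  γ a b * (γ (a * b * a⁻¹) a)⁻¹

/-- The underlying set `R × H` of the crossed `G`-set `G ×_H H` indexing the
monomial basis of the Lagrangian algebra `L(H,γ)`. -/
abbrev Xp (R : Set G) (H : Subgroup G) : Type := R × H

/-- The grading `|(r,h)| = rhr⁻¹` on `R × H`. -/
def dRH (R : Set G) (H : Subgroup G) : Xp R H → G :=
  fun p => (p.1 : G) * (p.2 : G) * (p.1 : G)⁻¹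

/-- The `G`-action `g · (r,h) = (g▷r, ^{κ(g,r)}h)` on `R × H`. -/
def actRH (R : Set G) (H : Subgroup G) (ar kap : G → G → G)
    (har : ∀ g r : G, r ∈ R → ar g r ∈ R)
    (hkap : ∀ g r : G, r ∈ R → kap g r ∈ H) :
    G → Xp R H → Xp R H :=
  fun g p =>
    (⟨ar g (p.1 : G), har g (p.1 : G) p.1.2⟩,
     ⟨kap g (p.1 : G) * (p.2 : G) * (kap g (p.1 : G))⁻¹,
      mul_mem (mul_mem (hkap g (p.1 : G) p.1.2) p.2.2)
        (inv_mem (hkap g (p.1 : G) p.1.2))⟩)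

/-- The twisted monomial structure of the Lagrangian algebra `L(H,γ)` on the
crossed `G`-set `R × H`:
`λ(g;r,h) = ω((gr)⁻¹, g⁻¹; ^r h) · ω(κ(g,r), (gr)⁻¹; ^{gr}h) · ε(κ(g,r), h)`. -/
def lamRH (ω : G → G → G → ℂˣ) (γ : G → G → ℂˣ) (R : Set G) (H : Subgroup G)
    (kap : G → G → G) : G → Xp R H → ℂˣ :=
  fun g p =>
    omega2 ω (g * (p.1 : G))⁻¹ g⁻¹ ((p.1 : G) * (p.2 : G) * (p.1 : G)⁻¹) *
    omega2 ω (kap g (p.1 : G)) (g * (p.1 : G))⁻¹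
      ((g * (p.1 : G)) * (p.2 : G) * (g * (p.1 : G))⁻¹) *
    epsilon γ (kap g (p.1 : G)) (p.2 : G)

end DW

/-! The action of `G` on `X = R × H` comes from left multiplication on `G/H`, so every point of
`X` has stabiliser exactly `H` and the degree `|(r, h)| = h` is `G`-invariant. With trivial `ω`
the twist is `λ(g; r, h) = ε(κ(g, r), h)`, and `ε` is a bicharacter on the abelian group `H`.
If `g` fixes a tuple then `g ∈ H` and `κ(g, rᵢ) = g`, so the twist of a tuple of degree `e` is
`ε(g, h₁⋯hₙ) = ε(g, e) = 1`: every such tuple is regular. For a twisted permutation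
representation the invariants supported on a union of regular orbits are freely determined by
their values on a transversal of those orbits. Each orbit in `(Xⁿ)_e` contains exactly one tuple
with `r₁ = e`, and these tuples are parametrised freely by `(r₂, h₂), …, (rₙ, hₙ)` (then
`h₁ = (h₂⋯hₙ)⁻¹`), giving `(|R| |H|)ⁿ⁻¹ = |G|ⁿ⁻¹`. -/

namespace DW

section TwistedInvariants

variable {G Y : Type*} [Group G] [MulAction G Y]

def IsCocycle {M : Type*} [Monoid M] (c : G → Y → M) : Prop :=
  ∀ (g g' : G) (y : Y), c (g * g') y = c g (g' • y) * c g' y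

theorem IsCocycle.pi {M ι : Type*} [CommMonoid M] [Fintype ι] {c : G → Y → M}
    (hc : IsCocycle c) : IsCocycle fun g (x : ι → Y) => ∏ i, c g (x i) := by
  intro g g' x
  simp only [hc g g', Finset.prod_mul_distrib, Pi.smul_apply]

theorem IsCocycle.eq_of_smul_eq {M : Type*} [Group M] {c : G → Y → M} (hc : IsCocycle c)
    {y : Y} (hy : ∀ g : G, g • y = y → c g y = 1) {g g' : G} (h : g • y = g' • y) :
    c g y = c g' y := by
  have hfix : (g⁻¹ * g') • y = y := by rw [mul_smul, ← h, inv_smul_smul]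
  rw [← mul_inv_cancel_left g g', hc, hfix, hy _ hfix, mul_one]

theorem card_orbits_eq_card {S T : Set Y} (hTS : T ⊆ S)
    (hT : ∀ y ∈ S, ∃! t ∈ T, ∃ g : G, g • t = y) :
    Nat.card {O : Quot (fun x y : Y => ∃ g : G, g • x = y) //
      ∃ x, Quot.mk _ x = O ∧ x ∈ S} = Nat.card T := by
  have horb : Equivalence fun x y : Y => ∃ g : G, g • x = y :=
    ⟨fun x => ⟨1, one_smul G x⟩, fun ⟨g, h⟩ => ⟨g⁻¹, by rw [← h, inv_smul_smul]⟩,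
      fun ⟨g, h⟩ ⟨g', h'⟩ => ⟨g' * g, by rw [mul_smul, h, h']⟩⟩
  refine (Nat.card_eq_of_bijective (fun t : T => ⟨Quot.mk _ t.1, t.1, rfl, hTS t.2⟩)
    ⟨?_, ?_⟩).symm
  · rintro ⟨t, ht⟩ ⟨t', ht'⟩ h
    obtain ⟨g, rfl⟩ := horb.eqvGen_iff.mp (Quot.eqvGen_exact (congrArg Subtype.val h))
    exact Subtype.ext ((hT _ (hTS ht')).unique ⟨ht, g, rfl⟩ ⟨ht', 1, one_smul G _⟩)
  · rintro ⟨O, x, rfl, hx⟩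
    obtain ⟨t, ⟨ht, g, rfl⟩, -⟩ := hT x hx
    exact ⟨⟨t, ht⟩, Subtype.ext (Quot.sound ⟨g, rfl⟩)⟩

variable {K : Type*} [Field K]

def twistedInvariants (c : G → Y → Kˣ) (S : Set Y) : Submodule K (Y → K) where
  carrier := {φ | (∀ y ∉ S, φ y = 0) ∧ ∀ (g : G) (y : Y), φ (g • y) = c g y * φ y}
  add_mem' hφ hψ := ⟨fun y hy => by simp [hφ.1 y hy, hψ.1 y hy],
    fun g y => by simp [hφ.2 g y, hψ.2 g y, mul_add]⟩
  zero_mem' := ⟨fun _ _ => rfl, fun _ _ => (mul_zero _).symm⟩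
  smul_mem' a φ hφ := ⟨fun y hy => by simp [hφ.1 y hy],
    fun g y => by simp [hφ.2 g y, mul_left_comm]⟩

variable {c : G → Y → Kˣ} {S T : Set Y}

theorem eq_zero_of_mem_twistedInvariants {φ : Y → K} (hφ : φ ∈ twistedInvariants c S)
    (hT : ∀ y ∈ S, ∃ t ∈ T, ∃ g : G, g • t = y) (h0 : ∀ t ∈ T, φ t = 0) :
    φ = 0 := by
  funext y
  by_cases hy : y ∈ S
  · obtain ⟨t, ht, g, rfl⟩ := hT y hy
    rw [hφ.2 g t, h0 t ht, mul_zero, Pi.zero_apply]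
  · exact hφ.1 y hy

theorem exists_mem_twistedInvariants_eqOn (hc : IsCocycle c)
    (hS : ∀ g : G, ∀ y ∈ S, g • y ∈ S) (hTS : T ⊆ S)
    (hT : ∀ y ∈ S, ∃! t ∈ T, ∃ g : G, g • t = y)
    (hreg : ∀ t ∈ T, ∀ g : G, g • t = t → c g t = 1) (ψ : Y → K) :
    ∃ φ ∈ twistedInvariants c S, Set.EqOn φ ψ T := by
  classical
  -- On the orbit of `t ∈ T` put `φ (a • t) = c a t * ψ t`; regularity of `t` makes this
  -- independent of the choice of `a`.
  choose! t htT a hat using fun y (hy : y ∈ S) => (hT y hy).exists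
  have ht_eq : ∀ y ∈ S, ∀ t' ∈ T, ∀ g : G, g • t' = y → t y = t' :=
    fun y hy t' ht' g h => (hT y hy).unique ⟨htT y hy, a y, hat y hy⟩ ⟨ht', g, h⟩
  refine ⟨fun y => if y ∈ S then c (a y) (t y) * ψ (t y) else 0,
    ⟨fun y hy => if_neg hy, fun g y => ?_⟩, fun t' ht' => ?_⟩
  · by_cases hy : y ∈ S
    · have hgy : g • y ∈ S := hS g y hy
      have hty : t (g • y) = t y :=
        ht_eq _ hgy _ (htT y hy) (g * a y) (by rw [mul_smul, hat y hy])
      have ha : c (a (g • y)) (t y) = c (g * a y) (t y) :=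
        hc.eq_of_smul_eq (hreg _ (htT y hy)) (by rw [mul_smul, hat y hy, ← hty, hat _ hgy])
      simp only [if_pos hy, if_pos hgy, hty, ha, hc g, hat y hy, Units.val_mul, mul_assoc]
    · have hgy : g • y ∉ S := fun h => hy (by simpa using hS g⁻¹ _ h)
      simp [hy, hgy]
  · have htt : t t' = t' := ht_eq t' (hTS ht') t' ht' 1 (one_smul G t')
    have h1 : c (a t') t' = 1 := hreg t' ht' _ (by simpa only [htt] using hat t' (hTS ht'))
    simp [if_pos (hTS ht'), htt, h1]

theorem finrank_twistedInvariants [Finite Y] (hc : IsCocycle c)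
    (hS : ∀ g : G, ∀ y ∈ S, g • y ∈ S) (hTS : T ⊆ S)
    (hT : ∀ y ∈ S, ∃! t ∈ T, ∃ g : G, g • t = y)
    (hreg : ∀ t ∈ T, ∀ g : G, g • t = t → c g t = 1) :
    Module.finrank K (twistedInvariants c S) = Nat.card T := by
  have := Fintype.ofFinite T
  let res : twistedInvariants c S →ₗ[K] (T → K) :=
    (LinearMap.funLeft K K ((↑) : T → Y)).comp (twistedInvariants c S).subtype
  have hinj : Function.Injective res := by
    rw [← LinearMap.ker_eq_bot, LinearMap.ker_eq_bot']
    intro φ hφ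
    exact Subtype.ext (eq_zero_of_mem_twistedInvariants φ.2 (fun y hy => (hT y hy).exists)
      fun t ht => congrFun hφ ⟨t, ht⟩)
  have hsurj : Function.Surjective res := by
    intro ψ
    obtain ⟨φ, hφ, hφψ⟩ :=
      exists_mem_twistedInvariants_eqOn hc hS hTS hT hreg (Function.extend (↑) ψ 0)
    exact ⟨⟨φ, hφ⟩,
      funext fun t => (hφψ t.2).trans (Subtype.val_injective.extend_apply _ _ t)⟩
  rw [(LinearEquiv.ofBijective res ⟨hinj, hsurj⟩).finrank_eq,
    Module.finrank_fintype_fun_eq_card, Nat.card_eq_fintype_card]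

end TwistedInvariants

section Tuples

variable {G X : Type} [Group G]

theorem pparts_self (d : X → G) {n : ℕ} (x : Fin n → X) :
    pparts d x n = (List.ofFn fun i => d (x i)).prod := by
  rw [pparts, List.take_of_length_le (List.length_ofFn).le]

theorem pparts_cons (d : X → G) {m : ℕ} (p : X) (v : Fin m → X) :
    pparts d (Fin.cons p v : Fin (m + 1) → X) (m + 1) = d p * pparts d v m := by
  simp [pparts_self, List.ofFn_succ]

theorem LamN_one (lam : G → X → ℂˣ) (d : X → G) {n : ℕ} (g : G) (x : Fin n → X) :
    LamN (fun _ _ _ => (1 : ℂˣ)) lam d g x = ∏ i, lam g (x i) := by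
  simp [LamN, omega1]

theorem invSub_one_eq_twistedInvariants [MulAction G X] (lam : G → X → ℂˣ) (d : X → G)
    (n : ℕ) :
    invSub (fun _ _ _ => (1 : ℂˣ)) lam d (fun g p => g • p) n =
      twistedInvariants (fun g (x : Fin n → X) => ∏ i, lam g (x i))
        {x | pparts d x n = 1} := by
  ext φ
  simp only [invSub, degSub, Submodule.mem_inf, Submodule.mem_iInf, LinearMap.mem_eqLocus,
    twistedInvariants, Submodule.mem_mk, AddSubmonoid.mem_mk, AddSubsemigroup.mem_mk,
    Set.mem_ofPred_eq, LinearMap.id_apply]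
  refine and_congr Iff.rfl (forall_congr' fun g => ⟨fun h y => ?_, fun h => funext fun y => ?_⟩)
  · have := congrFun h (g • y)
    simp only [rhoL, LinearMap.coe_mk, AddHom.coe_mk, LamN_one] at this
    simpa [← Pi.smul_apply', inv_smul_smul] using this.symm
  · simp only [rhoL, LinearMap.coe_mk, AddHom.coe_mk, LamN_one]
    have := (h (g⁻¹ • y)).symm
    rw [smul_inv_smul] at this
    exact this

end Tuples

def IsTwoCocycleOn {G : Type} [Group G] (γ : G → G → ℂˣ) (H : Subgroup G) : Prop :=
  ∀ a b c : G, a ∈ H → b ∈ H → c ∈ H → γ (a * b) c * γ a b = γ a (b * c) * γ b c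

section Epsilon

variable {G : Type} [Group G] {γ : G → G → ℂˣ} {H : Subgroup G}

theorem epsilon_eq_of_commute {a b : G} (h : Commute a b) :
    epsilon γ a b = γ a b * (γ b a)⁻¹ := by
  rw [epsilon, h.eq, mul_inv_cancel_right]

theorem epsilon_eq_inv_of_commute {a b : G} (h : Commute a b) :
    epsilon γ a b = (epsilon γ b a)⁻¹ := by
  rw [epsilon_eq_of_commute h, epsilon_eq_of_commute h.symm, mul_inv_rev, inv_inv]

variable (hγ : IsTwoCocycleOn γ H) (hH : ∀ a ∈ H, ∀ b ∈ H, Commute a b)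
include hγ hH

theorem epsilon_mul_right {a b c : G} (ha : a ∈ H) (hb : b ∈ H) (hc : c ∈ H) :
    epsilon γ a (b * c) = epsilon γ a b * epsilon γ a c := by
  have h₁ := hγ a b c ha hb hc
  have h₂ := hγ b a c hb ha hc
  have h₃ := hγ b c a hb hc ha
  rw [(hH a ha b hb).eq] at h₁
  rw [← (hH a ha c hc).eq] at h₃
  rw [epsilon_eq_of_commute (hH a ha _ (mul_mem hb hc)), epsilon_eq_of_commute (hH a ha b hb),
    epsilon_eq_of_commute (hH a ha c hc), eq_mul_inv_of_mul_eq h₁.symm,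
    eq_mul_inv_of_mul_eq h₃, eq_mul_inv_of_mul_eq h₂]
  ext
  push_cast
  field_simp

theorem epsilon_mul_left {a b c : G} (ha : a ∈ H) (hb : b ∈ H) (hc : c ∈ H) :
    epsilon γ (a * b) c = epsilon γ a c * epsilon γ b c := by
  rw [epsilon_eq_inv_of_commute (hH _ (mul_mem ha hb) _ hc), epsilon_mul_right hγ hH hc ha hb,
    mul_inv, ← epsilon_eq_inv_of_commute (hH _ ha _ hc),
    ← epsilon_eq_inv_of_commute (hH _ hb _ hc)]

def epsilonHom {a : G} (ha : a ∈ H) : H →* ℂˣ :=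
  MonoidHom.mk' (fun b => epsilon γ a b) fun b c => epsilon_mul_right hγ hH ha b.2 c.2

theorem prod_epsilon_eq_one {a : G} (ha : a ∈ H) {n : ℕ} (v : Fin n → H)
    (hv : (List.ofFn fun i => (v i : G)).prod = 1) : ∏ i, epsilon γ a (v i) = 1 := by
  have hv' : (List.ofFn v).prod = 1 := by
    rw [← OneMemClass.coe_eq_one, Subgroup.val_list_prod, List.map_ofFn]
    exact hv
  have := congrArg (epsilonHom hγ hH ha) hv'
  rwa [map_list_prod, List.map_ofFn, List.prod_ofFn, map_one] at this

end Epsilon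

theorem isComplement_of_existsUnique_inv_mul_mem {G : Type} [Group G] {R : Set G} {H : Subgroup G}
    (h : ∀ g : G, ∃! r : G, r ∈ R ∧ g⁻¹ * r ∈ H) : Subgroup.IsComplement R H := by
  refine Subgroup.isComplement_iff_existsUnique_inv_mul_mem.mpr fun g => ?_
  obtain ⟨r, ⟨hr, hgr⟩, huniq⟩ := h g
  refine ⟨⟨r, hr⟩, by simpa using inv_mem hgr,
    fun s hs => Subtype.ext (huniq s ⟨s.2, ?_⟩)⟩
  simpa using inv_mem hs

structure IsCosetFactorization {G : Type} [Group G] (H : Subgroup G) (R : Set G)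
    (ar kap : G → G → G) : Prop where
  isComplement : Subgroup.IsComplement R H
  ar_mem : ∀ g r : G, r ∈ R → ar g r ∈ R
  kap_mem : ∀ g r : G, r ∈ R → kap g r ∈ H
  mul_eq : ∀ g r : G, r ∈ R → g * r = ar g r * kap g r

section CosetAction

variable {G : Type} [Group G] {H : Subgroup G} {R : Set G} {ar kap : G → G → G}

theorem commute_of_le_center (hcen : H ≤ Subgroup.center G) {a : G} (ha : a ∈ H) (b : G) :
    Commute a b :=
  (Subgroup.mem_center_iff.mp (hcen ha) b).symm

theorem dRH_eq (hcen : H ≤ Subgroup.center G) (p : Xp R H) : dRH R H p = p.2 := by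
  rw [dRH, ← (commute_of_le_center hcen p.2.2 _).eq, mul_inv_cancel_right]

theorem actRH_snd (hcen : H ≤ Subgroup.center G) {har : ∀ g r : G, r ∈ R → ar g r ∈ R}
    {hkap : ∀ g r : G, r ∈ R → kap g r ∈ H} (g : G) (p : Xp R H) :
    (actRH R H ar kap har hkap g p).2 = p.2 :=
  Subtype.ext <| show kap g p.1 * p.2 * (kap g p.1)⁻¹ = (p.2 : G) by
    rw [(commute_of_le_center hcen (hkap g p.1 p.1.2) _).eq, mul_inv_cancel_right]

theorem pparts_actRH (hcen : H ≤ Subgroup.center G) {har : ∀ g r : G, r ∈ R → ar g r ∈ R}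
    {hkap : ∀ g r : G, r ∈ R → kap g r ∈ H} (g : G) {n : ℕ} (x : Fin n → Xp R H) :
    pparts (dRH R H) (fun i => actRH R H ar kap har hkap g (x i)) n =
      pparts (dRH R H) x n := by
  simp only [pparts, dRH_eq hcen, actRH_snd hcen]

theorem lamRH_one (γ : G → G → ℂˣ) (g : G) (p : Xp R H) :
    lamRH (fun _ _ _ => (1 : ℂˣ)) γ R H kap g p = epsilon γ (kap g p.1) p.2 := by
  simp [lamRH, omega2]

theorem pparts_dRH_mem (hcen : H ≤ Subgroup.center G) {n : ℕ} (x : Fin n → Xp R H)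
    (k : ℕ) :
    pparts (dRH R H) x k ∈ H := by
  refine list_prod_mem fun g hg => ?_
  obtain ⟨i, rfl⟩ := (List.mem_ofFn' _ _).mp (List.mem_of_mem_take hg)
  simpa only [dRH_eq hcen] using (x i).2.2

def normalizedTuples (R : Set G) (H : Subgroup G) (m : ℕ) : Set (Fin (m + 1) → Xp R H) :=
  {x | pparts (dRH R H) x (m + 1) = 1 ∧ ((x 0).1 : G) = 1}

namespace IsCosetFactorization

variable (hF : IsCosetFactorization H R ar kap)
include hF

theorem ar_kap_eq {g r r' k : G} (hr : r ∈ R) (hr' : r' ∈ R) (hk : k ∈ H)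
    (h : g * r = r' * k) : ar g r = r' ∧ kap g r = k := by
  have := @hF.isComplement.1 (⟨ar g r, hF.ar_mem g r hr⟩, ⟨kap g r, hF.kap_mem g r hr⟩)
    (⟨r', hr'⟩, ⟨k, hk⟩) (by simpa [← hF.mul_eq g r hr] using h)
  simpa [Prod.ext_iff] using this

theorem ar_kap_one {r : G} (hr : r ∈ R) : ar 1 r = r ∧ kap 1 r = 1 :=
  hF.ar_kap_eq hr hr H.one_mem (by rw [one_mul, mul_one])

theorem ar_kap_mul (g g' : G) {r : G} (hr : r ∈ R) :
    ar (g * g') r = ar g (ar g' r) ∧ kap (g * g') r = kap g (ar g' r) * kap g' r := by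
  refine hF.ar_kap_eq hr (hF.ar_mem _ _ (hF.ar_mem _ _ hr))
    (mul_mem (hF.kap_mem _ _ (hF.ar_mem _ _ hr)) (hF.kap_mem _ _ hr)) ?_
  rw [mul_assoc, hF.mul_eq g' r hr, ← mul_assoc, hF.mul_eq g _ (hF.ar_mem _ _ hr), mul_assoc]

theorem actRH_one (p : Xp R H) : actRH R H ar kap hF.ar_mem hF.kap_mem 1 p = p := by
  obtain ⟨har, hkap⟩ := hF.ar_kap_one p.1.2
  ext <;> simp [actRH, har, hkap]

theorem actRH_mul (g g' : G) (p : Xp R H) :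
    actRH R H ar kap hF.ar_mem hF.kap_mem (g * g') p =
      actRH R H ar kap hF.ar_mem hF.kap_mem g
        (actRH R H ar kap hF.ar_mem hF.kap_mem g' p) := by
  obtain ⟨har, hkap⟩ := hF.ar_kap_mul g g' p.1.2
  ext <;> simp [actRH, har, hkap, mul_assoc]

abbrev mulAction : MulAction G (Xp R H) where
  smul := actRH R H ar kap hF.ar_mem hF.kap_mem
  one_smul := hF.actRH_one
  mul_smul := hF.actRH_mul

section Central

variable (hcen : H ≤ Subgroup.center G)
include hcen

theorem ar_kap_of_mem {g r : G} (hg : g ∈ H) (hr : r ∈ R) :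
    ar g r = r ∧ kap g r = g :=
  hF.ar_kap_eq hr hr hg (commute_of_le_center hcen hg r)

theorem mem_of_ar_eq {g r : G} (hr : r ∈ R) (h : ar g r = r) :
    g ∈ H := by
  have hgr := hF.mul_eq g r hr
  rw [h, ← (commute_of_le_center hcen (hF.kap_mem g r hr) r).eq] at hgr
  exact mul_right_cancel hgr ▸ hF.kap_mem g r hr

theorem actRH_of_mem {g : G} (hg : g ∈ H) (p : Xp R H) :
    actRH R H ar kap hF.ar_mem hF.kap_mem g p = p :=
  Prod.ext (Subtype.ext (hF.ar_kap_of_mem hcen hg p.1.2).1) (actRH_snd hcen g p)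

theorem lamRH_mul {γ : G → G → ℂˣ} (hγ : IsTwoCocycleOn γ H) (g g' : G) (p : Xp R H) :
    lamRH (fun _ _ _ => (1 : ℂˣ)) γ R H kap (g * g') p =
      lamRH (fun _ _ _ => (1 : ℂˣ)) γ R H kap g (actRH R H ar kap hF.ar_mem hF.kap_mem g' p) *
        lamRH (fun _ _ _ => (1 : ℂˣ)) γ R H kap g' p := by
  rw [lamRH_one, lamRH_one, lamRH_one, actRH_snd hcen, (hF.ar_kap_mul g g' p.1.2).2]
  exact epsilon_mul_left hγ (fun a ha b _ => commute_of_le_center hcen ha b)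
    (hF.kap_mem _ _ (hF.ar_mem _ _ p.1.2)) (hF.kap_mem _ _ p.1.2) p.2.2

theorem prod_lamRH_eq_one {γ : G → G → ℂˣ} (hγ : IsTwoCocycleOn γ H) {n : ℕ}
    {x : Fin n → Xp R H} (hx : pparts (dRH R H) x n = 1) {g : G}
    (hg : ∀ i, actRH R H ar kap hF.ar_mem hF.kap_mem g (x i) = x i) :
    ∏ i, lamRH (fun _ _ _ => (1 : ℂˣ)) γ R H kap g (x i) = 1 := by
  rcases isEmpty_or_nonempty (Fin n) with hn | ⟨⟨i₀⟩⟩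
  · exact Fintype.prod_empty _
  have hgH : g ∈ H := hF.mem_of_ar_eq hcen (x i₀).1.2 (congrArg (fun p => (p.1 : G)) (hg i₀))
  calc ∏ i, lamRH (fun _ _ _ => (1 : ℂˣ)) γ R H kap g (x i) = ∏ i, epsilon γ g (x i).2 :=
        Finset.prod_congr rfl fun i _ => by
          rw [lamRH_one, (hF.ar_kap_of_mem hcen hgH (x i).1.2).2]
    _ = 1 := prod_epsilon_eq_one hγ (fun a ha b _ => commute_of_le_center hcen ha b) hgH _
        (by simpa only [pparts_self, dRH_eq hcen] using hx)

theorem eq_of_actRH_eq (heR : (1 : G) ∈ R) {m : ℕ} {t t' : Fin (m + 1) → Xp R H}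
    (ht : ((t 0).1 : G) = 1) (ht' : ((t' 0).1 : G) = 1) {g : G}
    (h : ∀ i, actRH R H ar kap hF.ar_mem hF.kap_mem g (t i) = t' i) : t = t' := by
  have hg : ar g (t 0).1 = (t' 0).1 := congrArg (fun p => (p.1 : G)) (h 0)
  rw [ht, ht'] at hg
  have hgH : g ∈ H := hF.mem_of_ar_eq hcen heR hg
  exact funext fun i => (hF.actRH_of_mem hcen hgH (t i)).symm.trans (h i)

theorem existsUnique_normalizedTuples (heR : (1 : G) ∈ R) {m : ℕ}
    {y : Fin (m + 1) → Xp R H} (hy : pparts (dRH R H) y (m + 1) = 1) :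
    ∃! t ∈ normalizedTuples R H m,
      ∃ g : G, (fun i => actRH R H ar kap hF.ar_mem hF.kap_mem g (t i)) = y := by
  set r : G := ((y 0).1 : G)
  refine existsUnique_of_exists_of_unique
    ⟨fun i => actRH R H ar kap hF.ar_mem hF.kap_mem r⁻¹ (y i),
      ⟨(pparts_actRH hcen _ y).trans hy, ?_⟩, r, ?_⟩ ?_
  · exact (hF.ar_kap_eq (y 0).1.2 heR H.one_mem (by rw [inv_mul_cancel, mul_one])).1
  · funext i
    rw [← hF.actRH_mul, mul_inv_cancel, hF.actRH_one]
  · rintro t t' ⟨⟨-, ht⟩, g, rfl⟩ ⟨⟨-, ht'⟩, g', hg'⟩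
    refine (hF.eq_of_actRH_eq hcen heR ht' ht (g := g⁻¹ * g') fun i => ?_).symm
    rw [hF.actRH_mul, congrFun hg' i, ← hF.actRH_mul, inv_mul_cancel, hF.actRH_one]

theorem card_normalizedTuples (heR : (1 : G) ∈ R) (m : ℕ) :
    Nat.card (normalizedTuples R H m) = Nat.card G ^ m := by
  calc Nat.card (normalizedTuples R H m) = Nat.card (Fin m → Xp R H) := Nat.card_congr
        { toFun := fun x => Fin.tail x.1
          invFun := fun v => ⟨Fin.cons (⟨1, heR⟩, ⟨(pparts (dRH R H) v m)⁻¹,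
            inv_mem (pparts_dRH_mem hcen v m)⟩) v, ?_, Fin.cons_zero _ _ ▸ rfl⟩
          left_inv := fun x => Subtype.ext ?_
          right_inv := fun v => Fin.tail_cons _ _ }
    _ = Nat.card G ^ m := by
      rw [Nat.card_fun, Nat.card_fin, Nat.card_prod]
      exact congrArg (· ^ m) hF.isComplement.card_mul_card
  · rw [pparts_cons, dRH_eq hcen, inv_mul_cancel]
  · have h := x.2.1
    rw [← Fin.cons_self_tail x.1, pparts_cons, dRH_eq hcen] at h
    conv_rhs => rw [← Fin.cons_self_tail x.1]
    dsimp only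
    congr 1
    exact Prod.ext (Subtype.ext x.2.2.symm) (Subtype.ext (eq_inv_of_mul_eq_one_left h).symm)

end Central

end IsCosetFactorization

end CosetAction

end DW

open DW

/-- Let `G` be a finite group, `H ≤ Z(G)` a central subgroup
and `γ` a 2-cocycle on `H` (the associated 3-cocycle `ω` is trivial).  Then the
dimension of the space of `G`-invariant vectors of degree `e` in `L(H,γ)^{⊗n}`
(the ground-state space `Hom_{Z(Vec_G)}(ℂ, L(H,γ)^{⊗n})`) equals `|G|^{n-1}`.
Equivalently, with `X = R×H` as a crossed `G`-set, every tuple in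
`(X^n)_e = {((r_i,h_i))_i : h_1⋯h_n = e}` is regular, and the number of
`G`-orbits in `(X^n)_e` is `|G|^{n-1}`. -/
theorem ground_state_degeneracy_central {G : Type} [Group G] [Fintype G]
    (γ : G → G → ℂˣ) (H : Subgroup G) (hcen : H ≤ Subgroup.center G)
    (hγ : ∀ a b c : G, a ∈ H → b ∈ H → c ∈ H →
      γ (a * b) c * γ a b = γ a (b * c) * γ b c)
    (R : Set G) (hRrep : ∀ g : G, ∃! r : G, r ∈ R ∧ g⁻¹ * r ∈ H)
    (heR : (1 : G) ∈ R)
    (ar kap : G → G → G)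
    (har : ∀ g r : G, r ∈ R → ar g r ∈ R)
    (hkap : ∀ g r : G, r ∈ R → kap g r ∈ H)
    (hfact : ∀ g r : G, r ∈ R → g * r = ar g r * kap g r)
    (n : ℕ) (hn : 1 ≤ n) :
    Module.finrank ℂ
        (invSub (fun _ _ _ => (1 : ℂˣ)) (lamRH (fun _ _ _ => (1 : ℂˣ)) γ R H kap)
          (dRH R H) (actRH R H ar kap har hkap) n) =
      Fintype.card G ^ (n - 1) ∧
    (∀ x : Fin n → Xp R H, pparts (dRH R H) x n = 1 →
      RegT (fun _ _ _ => (1 : ℂˣ)) (lamRH (fun _ _ _ => (1 : ℂˣ)) γ R H kap)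
        (dRH R H) (actRH R H ar kap har hkap) x) ∧
    Nat.card {O : Quot (tupleOrbRel (actRH R H ar kap har hkap) (n := n)) //
        ∃ x : Fin n → Xp R H,
          Quot.mk (tupleOrbRel (actRH R H ar kap har hkap)) x = O ∧
          pparts (dRH R H) x n = 1} =
      Fintype.card G ^ (n - 1) := by
  obtain ⟨m, rfl⟩ : ∃ m, n = m + 1 := ⟨n - 1, (Nat.sub_add_cancel hn).symm⟩
  have hF : IsCosetFactorization H R ar kap :=
    ⟨isComplement_of_existsUnique_inv_mul_mem hRrep, har, hkap, hfact⟩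
  let := hF.mulAction
  set S : Set (Fin (m + 1) → Xp R H) := {x | pparts (dRH R H) x (m + 1) = 1}
  have hS : ∀ g : G, ∀ x ∈ S, g • x ∈ S := fun g x hx => (pparts_actRH hcen g x).trans hx
  have hTS : normalizedTuples R H m ⊆ S := fun x hx => hx.1
  have hT : ∀ y ∈ S, ∃! t ∈ normalizedTuples R H m, ∃ g : G, g • t = y :=
    fun y hy => hF.existsUnique_normalizedTuples hcen heR hy
  have hreg : ∀ x ∈ S, ∀ g : G, g • x = x →
      ∏ i, lamRH (fun _ _ _ => (1 : ℂˣ)) γ R H kap g (x i) = 1 :=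
    fun x hx g hg => hF.prod_lamRH_eq_one hcen hγ hx (congrFun hg)
  rw [Nat.add_sub_cancel, ← Nat.card_eq_fintype_card, ← hF.card_normalizedTuples hcen heR]
  refine ⟨?_, fun x hx => ⟨hx, fun g hg => ?_⟩, card_orbits_eq_card hTS hT⟩
  · rw [← finrank_twistedInvariants (IsCocycle.pi (hF.lamRH_mul hcen hγ)) hS hTS hT
      fun t ht => hreg t (hTS ht), ← invSub_one_eq_twistedInvariants]
    rfl
  · rw [LamN_one]
    exact hreg x hx g (funext hg)
end
end
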